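/- If X = X₀ + S where S is a nondegenerate random variable symmetric about some point and independent of X₀, then the phase function of X equals the phase function of X₀ + c for the center of symmetry c of S, wherever φ_S is positive; in particular, the phase function does not determine X uniquely within the class of convolutions with symmetric distributions. -/

import Mathlib

/-!
By independence, `φ_X = φ_{X₀ + c} · φ_{S - c}`. Since `S - c` and `c - S` have the same law,
`φ_{S - c}` equals its own conjugate, hence is real; where it is positive it cancels from
`φ_X / |φ_X|`.
-/

open MeasureTheory ProbabilityTheory Complex
open scoped ComplexConjugate

/-- Characteristic function of a real random variable `X` under measure `P`. -/
noncomputable def charFun {Ω : Type*} [MeasurableSpace Ω] (P : Measure Ω)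
    (X : Ω → ℝ) (t : ℝ) : ℂ :=
  ∫ ω, Complex.exp (Complex.I * t * X ω) ∂P

lemma charFun_eq_charFun_map {Ω : Type*} [MeasurableSpace Ω] {P : Measure Ω} {X : Ω → ℝ}
    (hX : AEMeasurable X P) (t : ℝ) :
    _root_.charFun P X t = MeasureTheory.charFun (P.map X) t := by
  rw [charFun_apply_real, integral_map hX (by fun_prop)]
  simp only [_root_.charFun, mul_comm, mul_left_comm]

lemma ProbabilityTheory.IndepFun.charFun_add_eq_mul {Ω : Type*} [MeasurableSpace Ω]
    {P : Measure Ω} [IsFiniteMeasure P] {Y Z : Ω → ℝ} (hY : AEMeasurable Y P)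
    (hZ : AEMeasurable Z P) (hYZ : IndepFun Y Z P) (t : ℝ) :
    _root_.charFun P (fun ω => Y ω + Z ω) t = _root_.charFun P Y t * _root_.charFun P Z t := by
  rw [charFun_eq_charFun_map (X := fun ω => Y ω + Z ω) (hY.add hZ), charFun_eq_charFun_map hY,
    charFun_eq_charFun_map hZ, hYZ.charFun_map_fun_add_eq_mul hY hZ, Pi.mul_apply]

lemma charFun_map_neg (μ : Measure ℝ) (t : ℝ) :
    MeasureTheory.charFun (μ.map Neg.neg) t = conj (MeasureTheory.charFun μ t) := by
  rw [← charFun_neg, ← neg_one_mul, ← charFun_map_mul]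
  simp only [neg_one_mul]

lemma charFun_eq_ofReal_re_of_map_neg {μ : Measure ℝ} (hμ : μ.map Neg.neg = μ) (t : ℝ) :
    MeasureTheory.charFun μ t = (MeasureTheory.charFun μ t).re :=
  (conj_eq_iff_re.mp (by rw [← charFun_map_neg, hμ])).symm

lemma div_norm_mul_ofReal {z : ℂ} {r : ℝ} (hr : 0 < r) :
    z * r / ((‖z * r‖ : ℝ) : ℂ) = z / ((‖z‖ : ℝ) : ℂ) := by
  rw [norm_mul, norm_real, Real.norm_of_nonneg hr.le, ofReal_mul,
    mul_div_mul_right _ _ (ofReal_ne_zero.mpr hr.ne')]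

theorem phase_function_symmetric_component_general {Ω : Type*} [MeasurableSpace Ω] (P : Measure Ω)
    [IsProbabilityMeasure P] (X X₀ S : Ω → ℝ) (c : ℝ)
    (hX₀ : Measurable X₀) (hS : Measurable S)
    (hXdef : ∀ ω, X ω = X₀ ω + S ω)
    (hindep : IndepFun X₀ S P)
    (hsymm : P.map (fun ω => S ω - c) = P.map (fun ω => -(S ω - c))) :
    ∀ t : ℝ, 0 < (charFun P (fun ω => S ω - c) t).re →
      charFun P X t / ((‖charFun P X t‖ : ℝ) : ℂ)
        = charFun P (fun ω => X₀ ω + c) t /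
          ((‖charFun P (fun ω => X₀ ω + c) t‖ : ℝ) : ℂ) := by
  intro t hpos
  have hX₀c : Measurable fun ω => X₀ ω + c := hX₀.add_const c
  have hSc : Measurable fun ω => S ω - c := hS.sub_const c
  have hX : X = fun ω => (X₀ ω + c) + (S ω - c) := funext fun ω => by rw [hXdef]; ring
  have hfactor : _root_.charFun P X t
      = _root_.charFun P (fun ω => X₀ ω + c) t * _root_.charFun P (fun ω => S ω - c) t := by
    rw [hX]
    exact (hindep.comp (measurable_add_const c) (measurable_sub_const c)).charFun_add_eq_mul
      hX₀c.aemeasurable hSc.aemeasurable t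
  have hreal : _root_.charFun P (fun ω => S ω - c) t
      = (_root_.charFun P (fun ω => S ω - c) t).re := by
    rw [charFun_eq_charFun_map hSc.aemeasurable]
    refine charFun_eq_ofReal_re_of_map_neg ?_ t
    rw [Measure.map_map measurable_neg hSc, hsymm]
    rfl
  rw [hfactor, hreal]
  exact div_norm_mul_ofReal hpos

/-- If `X = X₀ + S` with `S` a nondegenerate random variable, symmetric about `c` and
independent of `X₀`, then the phase function of `X` equals the phase function of `X₀ + c`
wherever the (real) characteristic function of `S - c` is positive.  In particular, the
phase function does not determine `X` uniquely among convolutions with symmetric laws. -/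
theorem phase_function_symmetric_component {Ω : Type*} [MeasurableSpace Ω] (P : Measure Ω)
    [IsProbabilityMeasure P] (X X₀ S : Ω → ℝ) (c : ℝ)
    (hX₀ : Measurable X₀) (hS : Measurable S)
    (hXdef : ∀ ω, X ω = X₀ ω + S ω)
    (hindep : IndepFun X₀ S P)
    (hsymm : P.map (fun ω => S ω - c) = P.map (fun ω => -(S ω - c)))
    (hnondeg : ∀ x : ℝ, P.map S ≠ Measure.dirac x) :
    ∀ t : ℝ, 0 < (charFun P (fun ω => S ω - c) t).re →
      charFun P X t / ((‖charFun P X t‖ : ℝ) : ℂ)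
        = charFun P (fun ω => X₀ ω + c) t /
          ((‖charFun P (fun ω => X₀ ω + c) t‖ : ℝ) : ℂ) :=
  phase_function_symmetric_component_general P X X₀ S c hX₀ hS hXdef hindep hsymm
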